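/- Let F ∈ Fields_1 and m ≥ 3. The ℚ-linear map Λ^m F(t)^× → ⊕_p Λ^{m−1} F(p)^×, where the direct sum is over all monic irreducible polynomials p ∈ F[t] and the p-th component is the tame symbol ∂_{ν_p}^{(m)}, is surjective. -/

import Mathlib

open scoped TensorProduct
open ExteriorAlgebra

noncomputable section ChowPrelim

universe u

/-- The ℚ-vector space `F^× ⊗ ℚ` attached to a field `F`. -/
abbrev UnitsQ (F : Type u) [Field F] : Type u := ℚ ⊗[ℤ] (Additive Fˣ)

/-- The canonical map `F → F^× ⊗ ℚ`, sending a nonzero `x` to `x ⊗ 1` and `0` to `0`. -/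
noncomputable def mkQ {F : Type u} [Field F] (x : F) : UnitsQ F :=
  letI := Classical.dec (x = 0)
  if h : x = 0 then 0 else (1 : ℚ) ⊗ₜ[ℤ] (Additive.ofMul (Units.mk0 x h))

/-- The wedge `x₁ ∧ ⋯ ∧ xₙ ∈ Λ^n (F^× ⊗ ℚ)` of a family of elements of `F`. -/
noncomputable def wedgeF {F : Type u} [Field F] (n : ℕ) (x : Fin n → F) :
    ⋀[ℚ]^n (UnitsQ F) :=
  ⟨ExteriorAlgebra.ιMulti ℚ n (fun i => mkQ (x i)),
    ExteriorAlgebra.ιMulti_range ℚ n ⟨_, rfl⟩⟩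

/-- Wedge of an abstract family of vectors. -/
noncomputable def wedgeV {M : Type u} [AddCommGroup M] [Module ℚ M] (n : ℕ) (v : Fin n → M) :
    ⋀[ℚ]^n M :=
  ⟨ExteriorAlgebra.ιMulti ℚ n v, ExteriorAlgebra.ιMulti_range ℚ n ⟨_, rfl⟩⟩

/-- The product `a ∧ v₁ ∧ ⋯ ∧ v_q : Λ^r M` of an element `a ∈ Λ^p M` with `q` further vectors,
where `p + q = r`. -/
noncomputable def wedgeMulC {M : Type u} [AddCommGroup M] [Module ℚ M] (p q r : ℕ)
    (h : p + q = r) (a : ⋀[ℚ]^p M) (v : Fin q → M) : ⋀[ℚ]^r M :=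
  ⟨a.1 * (ExteriorAlgebra.ιMulti ℚ q v : ExteriorAlgebra ℚ M), by
    subst h
    have hmem : (ExteriorAlgebra.ιMulti ℚ q v : ExteriorAlgebra ℚ M) ∈
        (LinearMap.range (ι ℚ : M →ₗ[ℚ] ExteriorAlgebra ℚ M)) ^ q :=
      ExteriorAlgebra.ιMulti_range ℚ q ⟨_, rfl⟩
    have h2 := Submodule.mul_mem_mul a.2 hmem
    rw [← pow_add] at h2
    exact h2⟩

/-- The functorial map `Λ^n M → Λ^n N` induced by a linear map. -/
noncomputable def powMap {M N : Type u} [AddCommGroup M] [Module ℚ M]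
    [AddCommGroup N] [Module ℚ N] (n : ℕ) (f : M →ₗ[ℚ] N) :
    ⋀[ℚ]^n M →ₗ[ℚ] ⋀[ℚ]^n N :=
  (ExteriorAlgebra.map f).toLinearMap.restrict (p := ⋀[ℚ]^n M) (q := ⋀[ℚ]^n N)
    (by
      intro x hx
      have h : Submodule.map (ExteriorAlgebra.map f).toLinearMap (⋀[ℚ]^n M) ≤ ⋀[ℚ]^n N := by
        rw [← ExteriorAlgebra.ιMulti_span_fixedDegree, ← ExteriorAlgebra.ιMulti_span_fixedDegree,
          Submodule.map_span]
        refine Submodule.span_le.2 ?_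
        rintro _ ⟨_, ⟨v, rfl⟩, rfl⟩
        exact Submodule.subset_span ⟨f ∘ v, (ExteriorAlgebra.map_apply_ιMulti f v).symm⟩
      exact h ⟨x, hx, rfl⟩)

/-- The linear map `F^× ⊗ ℚ → K^× ⊗ ℚ` induced by a field embedding. -/
noncomputable def unitsQMap {F K : Type u} [Field F] [Field K] (j : F →+* K) :
    UnitsQ F →ₗ[ℚ] UnitsQ K :=
  LinearMap.baseChange ℚ
    ((MonoidHom.toAdditive (Units.map (j : F →* K))).toIntLinearMap)

section PreBloch

variable (F : Type u) [Field F]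

/-- Auxiliary "difference" of two points of `P^1(F) = Option F` (`none` is `∞`),
used to define the cross-ratio. -/
def pdiff : Option F → Option F → F
  | some a, some b => a - b
  | _, _ => 1

/-- The cross-ratio of four points of `P^1(F)`, as an element of `F`
(it lies in `F ∖ {0,1}` when the four points are distinct). -/
def crossRatio (x1 x2 x3 x4 : Option F) : F :=
  (pdiff F x1 x3 * pdiff F x2 x4) / (pdiff F x1 x4 * pdiff F x2 x3)

/-- The subspace of relations defining the pre-Bloch group: `{0}₂, {1}₂, {∞}₂` and the
five-term cross-ratio relations for five distinct points of `P^1(F)`. -/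
def B2Rel : Submodule ℚ (Option F →₀ ℚ) :=
  Submodule.span ℚ
    ({Finsupp.single (some 0) 1, Finsupp.single (some 1) 1, Finsupp.single none 1} ∪
      {r | ∃ x : Fin 5 → Option F, Function.Injective x ∧
        r = ∑ i : Fin 5, ((-1 : ℚ) ^ (i : ℕ)) •
          Finsupp.single (some (crossRatio F (x (i.succAbove 0)) (x (i.succAbove 1))
            (x (i.succAbove 2)) (x (i.succAbove 3)))) (1 : ℚ)})

/-- The pre-Bloch group `B₂(F)` (with ℚ-coefficients). -/
abbrev B2 : Type u := (Option F →₀ ℚ) ⧸ B2Rel F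

/-- The generator `{x}₂` of the pre-Bloch group. -/
def B2.gen {F : Type u} [Field F] (x : F) : B2 F :=
  Submodule.Quotient.mk (Finsupp.single (some x) 1)

end PreBloch

section Deltas

variable (F : Type u) [Field F]

/-- `d` is the differential `δ₂ : B₂(F) → Λ² F^×`, `{x}₂ ↦ x ∧ (1-x)`. -/
def IsDelta2 (d : B2 F →ₗ[ℚ] ⋀[ℚ]^2 (UnitsQ F)) : Prop :=
  ∀ x : F, x ≠ 0 → x ≠ 1 → d (B2.gen x) = wedgeF 2 ![x, 1 - x]

/-- `d` is the differential `δ₃ : B₂(F) ⊗ F^× → Λ³ F^×`, `{x}₂ ⊗ y ↦ x ∧ (1-x) ∧ y`. -/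
def IsDelta3 (d : B2 F ⊗[ℚ] UnitsQ F →ₗ[ℚ] ⋀[ℚ]^3 (UnitsQ F)) : Prop :=
  ∀ x y : F, x ≠ 0 → x ≠ 1 → y ≠ 0 →
    d (B2.gen x ⊗ₜ mkQ y) = wedgeF 3 ![x, 1 - x, y]

/-- `d` is the differential `δ₄ : B₂(F) ⊗ Λ² F^× → Λ⁴ F^×`,
`{x}₂ ⊗ (y ∧ z) ↦ x ∧ (1-x) ∧ y ∧ z`. -/
def IsDelta4 (d : B2 F ⊗[ℚ] (⋀[ℚ]^2 (UnitsQ F)) →ₗ[ℚ] ⋀[ℚ]^4 (UnitsQ F)) : Prop :=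
  ∀ x y z : F, x ≠ 0 → x ≠ 1 → y ≠ 0 → z ≠ 0 →
    d (B2.gen x ⊗ₜ wedgeF 2 ![y, z]) = wedgeF 4 ![x, 1 - x, y, z]

end Deltas

section Valuations

variable {F K : Type u} [Field F] [Field K]

/-- `ν` is (the additive form of) a discrete valuation on `F`:
a surjection onto `ℤ` defined on `F ∖ {0}`, multiplicative, and
satisfying the ultrametric inequality. -/
structure IsDVal (ν : F → ℤ) : Prop where
  map_mul : ∀ x y : F, x ≠ 0 → y ≠ 0 → ν (x * y) = ν x + ν y
  map_add : ∀ x y : F, x ≠ 0 → y ≠ 0 → x + y ≠ 0 → min (ν x) (ν y) ≤ ν (x + y)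
  surj : ∀ n : ℤ, ∃ x : F, x ≠ 0 ∧ ν x = n

/-- `res : F → K` realizes `K` as the residue field of the discrete valuation `ν`:
it is a surjective ring homomorphism on the valuation ring `O_ν` with kernel the
maximal ideal `m_ν` (and arbitrary elsewhere). -/
structure IsResidue (ν : F → ℤ) (res : F → K) : Prop where
  map_one : res 1 = 1
  map_add : ∀ x y : F, (x = 0 ∨ 0 ≤ ν x) → (y = 0 ∨ 0 ≤ ν y) →
    res (x + y) = res x + res y
  map_mul : ∀ x y : F, (x = 0 ∨ 0 ≤ ν x) → (y = 0 ∨ 0 ≤ ν y) →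
    res (x * y) = res x * res y
  zero_iff : ∀ x : F, (x = 0 ∨ 0 ≤ ν x) → (res x = 0 ↔ (x = 0 ∨ 0 < ν x))
  surj : ∀ z : K, ∃ x : F, (x = 0 ∨ 0 ≤ ν x) ∧ res x = z

/-- `D` is the tame symbol `∂_ν^{(n+1)} : Λ^{n+1} F^× → Λ^n K^×` attached to the discrete
valuation `ν` with residue field `K` (via `res`): it is characterized by
`∂(π ∧ u₂ ∧ ⋯ ∧ u_{n+1}) = ū₂ ∧ ⋯ ∧ ū_{n+1}` for a uniformizer `π` and units `uᵢ`. -/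
def IsTame (ν : F → ℤ) (res : F → K) (n : ℕ)
    (D : ⋀[ℚ]^(n + 1) (UnitsQ F) →ₗ[ℚ] ⋀[ℚ]^n (UnitsQ K)) : Prop :=
  ∀ (π : F) (u : Fin n → F), π ≠ 0 → ν π = 1 → (∀ i, u i ≠ 0 ∧ ν (u i) = 0) →
    D (wedgeF (n + 1) (Fin.cons π u)) = wedgeF n (fun i => res (u i))

/-- `D` is the tame symbol `∂_ν^{(2)} : Λ² F^× → K^×`, with target the residue field itself. -/
def IsTame2U (ν : F → ℤ) (res : F → K) (D : ⋀[ℚ]^2 (UnitsQ F) →ₗ[ℚ] UnitsQ K) : Prop :=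
  ∀ π u : F, π ≠ 0 → ν π = 1 → u ≠ 0 → ν u = 0 → D (wedgeF 2 ![π, u]) = mkQ (res u)

/-- `D` is the tame symbol `∂_ν : B₂(F) ⊗ F^× → B₂(K)`. -/
def IsTameB1 (ν : F → ℤ) (res : F → K)
    (D : B2 F ⊗[ℚ] UnitsQ F →ₗ[ℚ] B2 K) : Prop :=
  (∀ a b : F, a ≠ 0 → a ≠ 1 → ν a ≠ 0 → b ≠ 0 → D (B2.gen a ⊗ₜ mkQ b) = 0) ∧
  (∀ u b : F, u ≠ 0 → ν u = 0 → b ≠ 0 →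
    D (B2.gen u ⊗ₜ mkQ b) = -((ν b : ℚ) • B2.gen (res u)))

/-- `D` is the tame symbol `∂_ν : B₂(F) ⊗ Λ² F^× → B₂(K) ⊗ K^×`, where `D2` is the tame
symbol `∂_ν^{(2)}`. -/
def IsTameB2 (ν : F → ℤ) (res : F → K) (D2 : ⋀[ℚ]^2 (UnitsQ F) →ₗ[ℚ] UnitsQ K)
    (D : B2 F ⊗[ℚ] (⋀[ℚ]^2 (UnitsQ F)) →ₗ[ℚ] B2 K ⊗[ℚ] UnitsQ K) : Prop :=
  (∀ (a : F) (b : ⋀[ℚ]^2 (UnitsQ F)), a ≠ 0 → a ≠ 1 → ν a ≠ 0 → D (B2.gen a ⊗ₜ b) = 0) ∧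
  (∀ (u : F) (b : ⋀[ℚ]^2 (UnitsQ F)), u ≠ 0 → ν u = 0 →
    D (B2.gen u ⊗ₜ b) = -(B2.gen (res u) ⊗ₜ D2 b))

/-- `D` is the tame symbol `∂_ν : B₂(F) ⊗ Λ^{n+1} F^× → B₂(K) ⊗ Λ^n K^×`, where `Dn` is
the tame symbol `∂_ν^{(n+1)}`. -/
def IsTameBGen (ν : F → ℤ) (res : F → K) (n : ℕ)
    (Dn : ⋀[ℚ]^(n + 1) (UnitsQ F) →ₗ[ℚ] ⋀[ℚ]^n (UnitsQ K))
    (D : B2 F ⊗[ℚ] (⋀[ℚ]^(n + 1) (UnitsQ F)) →ₗ[ℚ] B2 K ⊗[ℚ] (⋀[ℚ]^n (UnitsQ K))) : Prop :=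
  (∀ (a : F) (b : ⋀[ℚ]^(n + 1) (UnitsQ F)), a ≠ 0 → a ≠ 1 → ν a ≠ 0 →
    D (B2.gen a ⊗ₜ b) = 0) ∧
  (∀ (u : F) (b : ⋀[ℚ]^(n + 1) (UnitsQ F)), u ≠ 0 → ν u = 0 →
    D (B2.gen u ⊗ₜ b) = -(B2.gen (res u) ⊗ₜ Dn b))

end Valuations

section Fields

variable (k F : Type u) [Field k] [Field F] [Algebra k F]

/-- `F` is a finitely generated extension of `k` of transcendence degree `1`. -/
def IsFields1 : Prop :=
  (∃ s : Finset F, IntermediateField.adjoin k (s : Set F) = ⊤) ∧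
  ∃ x : F, Transcendental k x ∧
    Algebra.IsAlgebraic (IntermediateField.adjoin k {x}) F

/-- `F` is a finitely generated extension of `k` of transcendence degree `2`. -/
def IsFields2 : Prop :=
  (∃ s : Finset F, IntermediateField.adjoin k (s : Set F) = ⊤) ∧
  ∃ x y : F, AlgebraicIndependent k ![x, y] ∧
    Algebra.IsAlgebraic (IntermediateField.adjoin k {x, y}) F

/-- `res : F → k` is the canonical residue map of `ν` onto `k`
(restricting to the identity on `k`). -/
def GoodResK (ν : F → ℤ) (res : F → k) : Prop :=
  IsResidue ν res ∧ ∀ c : k, res (algebraMap k F c) = c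

/-- The set `val(F)` of discrete valuations of `F` trivial on `k` with residue field `k`. -/
def ValInd : Type u :=
  {ν : F → ℤ // IsDVal ν ∧ (∀ c : k, c ≠ 0 → ν (algebraMap k F c) = 0) ∧
    ∃ res : F → k, GoodResK k F ν res}

/-- `h : Λ³ F^× → B₂(k)` is a lifted reciprocity map on `F ∈ Fields₁`:
(1) `-δ₂(h a) = Σ_{ν ∈ val(F)} ∂_ν^{(3)} a`;
(2) `h (δ₃ c) = Σ_{ν ∈ val(F)} ∂_ν c`;
(3) `h` vanishes on the image of `Λ² F^× ⊗ k^× → Λ³ F^×`. -/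
def IsLiftedRec (h : ⋀[ℚ]^3 (UnitsQ F) →ₗ[ℚ] B2 k) : Prop :=
  (∀ d2 : B2 k →ₗ[ℚ] ⋀[ℚ]^2 (UnitsQ k), IsDelta2 k d2 →
    ∀ res : ∀ _ : ValInd k F, F → k, (∀ v : ValInd k F, GoodResK k F v.1 (res v)) →
    ∀ D : ∀ _ : ValInd k F, ⋀[ℚ]^3 (UnitsQ F) →ₗ[ℚ] ⋀[ℚ]^2 (UnitsQ k),
      (∀ v : ValInd k F, IsTame v.1 (res v) 2 (D v)) →
    ∀ a : ⋀[ℚ]^3 (UnitsQ F), -(d2 (h a)) = ∑ᶠ v : ValInd k F, D v a) ∧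
  (∀ d3 : B2 F ⊗[ℚ] UnitsQ F →ₗ[ℚ] ⋀[ℚ]^3 (UnitsQ F), IsDelta3 F d3 →
    ∀ res : ∀ _ : ValInd k F, F → k, (∀ v : ValInd k F, GoodResK k F v.1 (res v)) →
    ∀ DB : ∀ _ : ValInd k F, B2 F ⊗[ℚ] UnitsQ F →ₗ[ℚ] B2 k,
      (∀ v : ValInd k F, IsTameB1 v.1 (res v) (DB v)) →
    ∀ c : B2 F ⊗[ℚ] UnitsQ F, h (d3 c) = ∑ᶠ v : ValInd k F, DB v c) ∧
  (∀ (y z : F) (c : k), y ≠ 0 → z ≠ 0 → c ≠ 0 →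
    h (wedgeF 3 ![y, z, algebraMap k F c]) = 0)

end Fields

/-- The degree `[K : j(F)]` of a field embedding. -/
noncomputable def fieldDeg {F K : Type u} [Field F] [Field K] (j : F →+* K) : ℕ :=
  letI : Algebra F K := j.toAlgebra
  Module.finrank F K

/-- The pullback `j^* h = (1/[F₂ : j(F₁)]) · h ∘ j_*` of a lifted reciprocity map. -/
noncomputable def pullRec (k F₁ F₂ : Type u) [Field k] [Field F₁] [Field F₂]
    (j : F₁ →+* F₂) (h : ⋀[ℚ]^3 (UnitsQ F₂) →ₗ[ℚ] B2 k) :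
    ⋀[ℚ]^3 (UnitsQ F₁) →ₗ[ℚ] B2 k :=
  ((fieldDeg j : ℚ))⁻¹ • (h ∘ₗ powMap 3 (unitsQMap j))

end ChowPrelim

noncomputable section ChowPrelim2

universe u

open scoped TensorProduct

/-- The monic irreducible polynomials over `F`, indexing the closed points of `𝔸¹_F`,
i.e. the general discrete valuations of `F(t)`. -/
def MonicIrr (F : Type u) [Field F] : Type u :=
  {p : Polynomial F // p.Monic ∧ Irreducible p}

/-- The residue field `F(p) = F[t]/(p)` of the valuation attached to a monic irreducible
polynomial `p`. -/
def ResField {F : Type u} [Field F] (p : MonicIrr F) : Type u := AdjoinRoot p.1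

noncomputable instance ResField.instField {F : Type u} [Field F] (p : MonicIrr F) :
    Field (ResField p) :=
  letI : Fact (Irreducible p.1) := ⟨p.2.2⟩
  inferInstanceAs (Field (AdjoinRoot p.1))

/-- `ν` is the discrete valuation of `F(t)` attached to the monic irreducible polynomial `p`. -/
def IsNuP {F : Type u} [Field F] (p : MonicIrr F) (ν : RatFunc F → ℤ) : Prop :=
  IsDVal ν ∧ ν (algebraMap (Polynomial F) (RatFunc F) p.1) = 1 ∧
    ∀ g : Polynomial F, g ≠ 0 → ¬(p.1 ∣ g) →
      ν (algebraMap (Polynomial F) (RatFunc F) g) = 0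

/-- `res` is the canonical residue map `F(t) → F(p)` of the valuation attached to `p`. -/
def IsResP {F : Type u} [Field F] (p : MonicIrr F) (ν : RatFunc F → ℤ)
    (res : RatFunc F → ResField p) : Prop :=
  IsResidue ν res ∧ ∀ g : Polynomial F,
    res (algebraMap (Polynomial F) (RatFunc F) g) =
      (AdjoinRoot.mk p.1 g : AdjoinRoot p.1)

/-- Bundled realization of the residue field of a discrete valuation `ν` on `L`
(trivial on `k`): a field `R` with a `k`-algebra structure together with the residue map. -/
structure ResData (k L : Type u) [Field k] [Field L] [Algebra k L] (ν : L → ℤ) :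
    Type (u + 1) where
  R : Type u
  [fieldR : Field R]
  [algR : Algebra k R]
  res : L → R
  isRes : IsResidue ν res
  compat : ∀ c : k, res (algebraMap k L c) = algebraMap k R c

attribute [instance] ResData.fieldR ResData.algR

/-- The set `dval(L)` of divisorial valuations of `L ∈ Fields₂`: discrete valuations trivial
on `k` whose residue field is a finitely generated extension of `k` of transcendence
degree `1`. -/
def DValInd (k L : Type u) [Field k] [Field L] [Algebra k L] : Type u :=
  {ν : L → ℤ // IsDVal ν ∧ (∀ c : k, c ≠ 0 → ν (algebraMap k L c) = 0) ∧
    ∃ rd : ResData k L ν, IsFields1 k rd.R}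

/-- A height-one prime ideal (in a domain). -/
def IsHeightOne {R : Type u} [CommRing R] (p : Ideal R) : Prop :=
  p.IsPrime ∧ p ≠ ⊥ ∧ ∀ q : Ideal R, q.IsPrime → q < p → q = ⊥

/-- `R/p` is regular, i.e. (for a one-dimensional local ring) the maximal ideal of `R/p`
is principal. -/
def QuotRegular {R : Type u} [CommRing R] [IsLocalRing R] (p : Ideal R) : Prop :=
  ∃ t : R, Ideal.map (Ideal.Quotient.mk p) (IsLocalRing.maximalIdeal R) =
    Ideal.span {Ideal.Quotient.mk p t}

/-- The height-one primes `p` of `R` with `R/p` regular. -/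
def RegPrimes (R : Type u) [CommRing R] [IsLocalRing R] : Type u :=
  {p : Ideal R // IsHeightOne p ∧ QuotRegular p}

instance RegPrimes.isPrime {R : Type u} [CommRing R] [IsLocalRing R] (p : RegPrimes R) :
    p.1.IsPrime := p.2.1.1

/-- The residue field `κ(p) = Frac(R/p)` of a prime `p`. -/
def ResFieldP {R : Type u} [CommRing R] [IsLocalRing R] [IsDomain R] (p : RegPrimes R) :
    Type u := FractionRing (R ⧸ p.1)

noncomputable instance ResFieldP.instField {R : Type u} [CommRing R] [IsLocalRing R]
    [IsDomain R] (p : RegPrimes R) : Field (ResFieldP p) :=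
  inferInstanceAs (Field (FractionRing (R ⧸ p.1)))

/-- `ν` is the discrete valuation `ν_p` of `L = Frac R` attached to a height-one prime `p`:
it is nonnegative on `R` and positive exactly on `p`. -/
def IsNuPrime {R L : Type u} [CommRing R] [Field L] [Algebra R L] (p : Ideal R)
    (ν : L → ℤ) : Prop :=
  IsDVal ν ∧ (∀ x : R, x ≠ 0 → 0 ≤ ν (algebraMap R L x)) ∧
    ∀ x : R, x ≠ 0 → (x ∈ p ↔ 0 < ν (algebraMap R L x))

/-- `res` is the canonical residue map `L → κ(p)` of the valuation `ν_p`. -/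
def IsResPrime {R L : Type u} [CommRing R] [IsLocalRing R] [IsDomain R] [Field L]
    [Algebra R L] (p : RegPrimes R) (ν : L → ℤ) (res : L → ResFieldP p) : Prop :=
  IsResidue ν res ∧ ∀ x : R,
    res (algebraMap R L x) =
      algebraMap (R ⧸ p.1) (FractionRing (R ⧸ p.1)) (Ideal.Quotient.mk p.1 x)

/-- `ν̄` is the discrete valuation of `κ(p)` attached to the discrete valuation ring `R/p`:
nonnegative on `R/p` and positive exactly on the image of the maximal ideal of `R`. -/
def IsNuBar {R : Type u} [CommRing R] [IsLocalRing R] [IsDomain R] (p : RegPrimes R)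
    (ν : ResFieldP p → ℤ) : Prop :=
  IsDVal ν ∧
  (∀ x : R ⧸ p.1, x ≠ 0 →
    0 ≤ ν (algebraMap (R ⧸ p.1) (FractionRing (R ⧸ p.1)) x)) ∧
  ∀ x : R, Ideal.Quotient.mk p.1 x ≠ 0 →
    (x ∈ IsLocalRing.maximalIdeal R ↔
      0 < ν (algebraMap (R ⧸ p.1) (FractionRing (R ⧸ p.1)) (Ideal.Quotient.mk p.1 x)))

/-- `res` is the canonical residue map `κ(p) → k` of the valuation `ν̄_p`
(restricting to the identity on `k`). -/
def IsResBar {k R : Type u} [Field k] [CommRing R] [IsLocalRing R] [IsDomain R]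
    [Algebra k R] (p : RegPrimes R) (ν : ResFieldP p → ℤ) (res : ResFieldP p → k) : Prop :=
  IsResidue ν res ∧ ∀ c : k,
    res (algebraMap (R ⧸ p.1) (FractionRing (R ⧸ p.1))
      (Ideal.Quotient.mk p.1 (algebraMap k R c))) = c

/-- The Steinberg relations subspace of `Λ^n F^×` (with ℚ-coefficients). -/
def MilnorRel (F : Type u) [Field F] : (n : ℕ) → Submodule ℚ (⋀[ℚ]^n (UnitsQ F))
  | 0 => ⊥
  | 1 => ⊥
  | (m + 2) => Submodule.span ℚ
      {x | ∃ (a : F) (v : Fin m → F), a ≠ 0 ∧ a ≠ 1 ∧ (∀ i, v i ≠ 0) ∧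
        x = wedgeF (m + 2) (Fin.cons a (Fin.cons (1 - a) v))}

/-- The rational Milnor K-group `K_n^M(F) ⊗ ℚ`: the quotient of `Λ^n F^×` by the
Steinberg relations. -/
def MilnorQ (F : Type u) [Field F] (n : ℕ) : Type u :=
  (⋀[ℚ]^n (UnitsQ F)) ⧸ MilnorRel F n

noncomputable instance MilnorQ.instAddCommGroup (F : Type u) [Field F] (n : ℕ) :
    AddCommGroup (MilnorQ F n) :=
  inferInstanceAs (AddCommGroup ((⋀[ℚ]^n (UnitsQ F)) ⧸ MilnorRel F n))

noncomputable instance MilnorQ.instModule (F : Type u) [Field F] (n : ℕ) :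
    Module ℚ (MilnorQ F n) :=
  inferInstanceAs (Module ℚ ((⋀[ℚ]^n (UnitsQ F)) ⧸ MilnorRel F n))

/-- The class of an element of `Λ^n F^×` in `K_n^M(F) ⊗ ℚ`. -/
def MilnorQ.mk {F : Type u} [Field F] {n : ℕ} (x : ⋀[ℚ]^n (UnitsQ F)) : MilnorQ F n :=
  Submodule.Quotient.mk x

end ChowPrelim2

open scoped TensorProduct

universe u

/-! The tame symbol at `p` sends `p ∧ g₁ ∧ ⋯ ∧ g_{m-1}` to `ḡ₁ ∧ ⋯ ∧ ḡ_{m-1}`, and wedges of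
units span `Λ^{m-1} F(p)^×`; choosing the `gᵢ` of degree `< deg p`, the lift is a wedge of
`q`-units for every other `q` with `deg q ≥ deg p`, so its tame symbol there vanishes, and it is
nonzero at only the finitely many `q` dividing an entry. The total tame map is thus triangular
with respect to the degree of `p`, and an element of the direct sum is hit by induction on the
largest degree in its support. -/

open Polynomial

section TriangularLifts

variable {R ι M : Type*} {N : ι → Type*} [Ring R] [AddCommGroup M] [Module R M]
  [∀ i, AddCommGroup (N i)] [∀ i, Module R (N i)] (D : ∀ i, M →ₗ[R] N i) (deg : ι → ℕ)

def triangularLifts (i : ι) : Submodule R M where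
  carrier := {m | (∀ j, j ≠ i → deg i ≤ deg j → D j m = 0) ∧ {j | D j m ≠ 0}.Finite}
  add_mem' {m m'} hm hm' := by
    refine ⟨fun j hj hd => by rw [map_add, hm.1 j hj hd, hm'.1 j hj hd, add_zero], ?_⟩
    refine (hm.2.union hm'.2).subset fun j hj => ?_
    contrapose! hj
    simp_all
  zero_mem' := ⟨fun j _ _ => map_zero _, by simp⟩
  smul_mem' c m hm := by
    refine ⟨fun j hj hd => by rw [map_smul, hm.1 j hj hd, smul_zero], hm.2.subset fun j hj => ?_⟩
    contrapose! hj
    simp_all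

variable {D deg}

lemma exists_sub_eq_zero_of_le_deg (hlift : ∀ i, (triangularLifts D deg i).map (D i) = ⊤)
    {d : ℕ} (a : ∀ i, N i) (ha : {i | a i ≠ 0}.Finite) (had : ∀ j, d + 1 ≤ deg j → a j = 0) :
    ∃ m, {j | a j - D j m ≠ 0}.Finite ∧ ∀ j, d ≤ deg j → a j - D j m = 0 := by
  classical
  have hlift' : ∀ i (y : N i), ∃ m ∈ triangularLifts D deg i, D i m = y := fun i y =>
    (hlift i).ge Submodule.mem_top
  choose lift hlift_mem hlift_eq using hlift'
  set S := ha.toFinset.filter (deg · = d)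
  refine ⟨∑ i ∈ S, lift i (a i), ?_, fun j hj => ?_⟩
  · refine (ha.union (S.finite_toSet.biUnion fun i _ => (hlift_mem i (a i)).2)).subset
      fun j hj => ?_
    contrapose! hj
    simp only [Set.mem_union, Set.mem_ofPred_eq, Set.mem_iUnion, not_or, not_not,
      not_exists] at hj ⊢
    rw [hj.1, map_sum, Finset.sum_eq_zero hj.2, sub_zero]
  · rw [map_sum, Finset.sum_eq_single j, hlift_eq, sub_self]
    · exact fun i hi hij => (hlift_mem i (a i)).1 j (Ne.symm hij)
        ((Finset.mem_filter.1 hi).2.trans_le hj)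
    · intro hjS
      have haj : a j = 0 := by
        by_contra haj
        exact hjS (Finset.mem_filter.2 ⟨ha.mem_toFinset.2 haj,
          le_antisymm (not_lt.1 fun hlt => haj (had j hlt)) hj⟩)
      rw [hlift_eq, haj]

theorem exists_forall_apply_eq_of_triangularLifts
    (hlift : ∀ i, (triangularLifts D deg i).map (D i) = ⊤)
    (a : ∀ i, N i) (ha : {i | a i ≠ 0}.Finite) : ∃ m, ∀ i, D i m = a i := by
  suffices h : ∀ (d : ℕ) (a : ∀ i, N i), {i | a i ≠ 0}.Finite → (∀ j, d ≤ deg j → a j = 0) →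
      ∃ m, ∀ i, D i m = a i by
    obtain ⟨B, hB⟩ := (ha.image deg).bddAbove
    refine h (B + 1) a ha fun j hj => ?_
    by_contra haj
    have := hB ⟨j, haj, rfl⟩
    omega
  intro d
  induction d with
  | zero => exact fun a _ ha0 => ⟨0, fun i => by rw [map_zero, ha0 i (Nat.zero_le _)]⟩
  | succ d ih =>
    intro a ha had
    obtain ⟨m, hfin, hlow⟩ := exists_sub_eq_zero_of_le_deg hlift a ha had
    obtain ⟨m', hm'⟩ := ih _ hfin hlow
    exact ⟨m + m', fun i => by rw [map_add, hm' i, add_sub_cancel]⟩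

end TriangularLifts

section UnitsQ

variable {K : Type*} [Field K]

lemma mkQ_mul {x y : K} (hx : x ≠ 0) (hy : y ≠ 0) : mkQ (x * y) = mkQ x + mkQ y := by
  rw [mkQ, mkQ, mkQ, dif_neg (mul_ne_zero hx hy), dif_neg hx, dif_neg hy, ← TensorProduct.tmul_add,
    ← ofMul_mul, ← Units.mk0_mul]

lemma mkQ_coe_units (u : Kˣ) : mkQ (u : K) = (1 : ℚ) ⊗ₜ[ℤ] Additive.ofMul u := by
  rw [mkQ, dif_neg u.ne_zero, Units.mk0_val]

lemma span_range_mkQ_units : Submodule.span ℚ (Set.range fun u : Kˣ => mkQ (u : K)) = ⊤ := by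
  have h : (Set.range fun u : Kˣ => mkQ (u : K)) =
      TensorProduct.mk ℤ ℚ (Additive Kˣ) 1 '' Set.univ := by
    ext x
    simp only [Set.mem_range, mkQ_coe_units, Set.image_univ, TensorProduct.mk_apply]
    exact ⟨fun ⟨u, hu⟩ => ⟨Additive.ofMul u, hu⟩, fun ⟨u, hu⟩ => ⟨u.toMul, hu⟩⟩
  rw [h, ← Submodule.baseChange_span, Submodule.span_univ, Submodule.baseChange_top]

lemma wedgeF_eq_ιMulti (m : ℕ) (x : Fin m → K) :
    wedgeF m x = exteriorPower.ιMulti ℚ m fun i => mkQ (x i) := rfl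

lemma span_range_wedgeF_units (m : ℕ) :
    Submodule.span ℚ (Set.range fun u : Fin m → Kˣ => wedgeF m fun i => (u i : K)) = ⊤ := by
  rw [eq_top_iff, ← exteriorPower.ιMulti_span_of_span ℚ m (UnitsQ K) span_range_mkQ_units]
  refine Submodule.span_mono ?_
  rintro _ ⟨v, hv, rfl⟩
  choose u hu using fun i => hv (Set.mem_range_self i)
  simp only at hu
  exact ⟨u, by simp only [wedgeF_eq_ιMulti, hu]⟩

lemma wedgeF_cons_mul {m : ℕ} {x y : K} (hx : x ≠ 0) (hy : y ≠ 0) (w : Fin m → K) :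
    wedgeF (m + 1) (Fin.cons (x * y) w) =
      wedgeF (m + 1) (Fin.cons x w) + wedgeF (m + 1) (Fin.cons y w) := by
  have hcomp (z : K) :
      (fun i => mkQ ((Fin.cons z w : Fin (m + 1) → K) i)) = Fin.cons (mkQ z) (mkQ ∘ w) :=
    Fin.comp_cons mkQ z w
  simp only [wedgeF_eq_ιMulti, hcomp, mkQ_mul hx hy]
  exact (exteriorPower.ιMulti ℚ (m + 1)).toMultilinearMap.cons_add _ _ _

end UnitsQ

section TameSymbol

variable {F K : Type u} [Field F] [Field K] {ν : F → ℤ} {res : F → K} {m : ℕ}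
  {D : ⋀[ℚ]^(m + 1) (UnitsQ F) →ₗ[ℚ] ⋀[ℚ]^m (UnitsQ K)}

/-- Write `u₀ = (π u₀) / π` for a uniformizer `π`: both `π u₀` and `π` are uniformizers. -/
lemma IsTame.map_wedgeF_eq_zero (hD : IsTame ν res m D) (hν : IsDVal ν) (u : Fin (m + 1) → F)
    (hu : ∀ i, u i ≠ 0 ∧ ν (u i) = 0) : D (wedgeF (m + 1) u) = 0 := by
  obtain ⟨π, hπ0, hπ1⟩ := hν.surj 1
  have htail : ∀ i, Fin.tail u i ≠ 0 ∧ ν (Fin.tail u i) = 0 := fun i => hu i.succ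
  have hπu : ν (π * u 0) = 1 := by rw [hν.map_mul _ _ hπ0 (hu 0).1, hπ1, (hu 0).2, add_zero]
  have h := congrArg D (wedgeF_cons_mul hπ0 (hu 0).1 (Fin.tail u))
  rwa [map_add, hD _ _ (mul_ne_zero hπ0 (hu 0).1) hπu htail, hD _ _ hπ0 hπ1 htail,
    left_eq_add, Fin.cons_self_tail] at h

end TameSymbol

section RationalFunctionField

variable {F : Type u} [Field F]

lemma MonicIrr.finite_setOf_dvd {g : F[X]} (hg : g ≠ 0) : {q : MonicIrr F | q.1 ∣ g}.Finite := by
  classical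
  refine ((UniqueFactorizationMonoid.normalizedFactors g).toFinset.finite_toSet.preimage
    Subtype.val_injective.injOn).subset fun q hq =>
    Multiset.mem_toFinset.2 ((Polynomial.mem_normalizedFactors_iff hg).2 ⟨q.2.2, q.2.1, hq⟩)

lemma MonicIrr.not_dvd_of_ne {p q : MonicIrr F} (h : q ≠ p) : ¬ q.1 ∣ p.1 := fun hdvd =>
  h (Subtype.ext (eq_of_monic_of_associated q.2.1 p.2.1 (q.2.2.associated_of_dvd p.2.2 hdvd)))

lemma MonicIrr.exists_lift (p : MonicIrr F) {y : ResField p} (hy : y ≠ 0) :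
    ∃ g : F[X], g ≠ 0 ∧ g.natDegree < p.1.natDegree ∧ (AdjoinRoot.mk p.1 g : ResField p) = y := by
  obtain ⟨f, rfl⟩ := AdjoinRoot.mk_surjective (g := p.1) y
  have hmk : AdjoinRoot.mk p.1 (f %ₘ p.1) = AdjoinRoot.mk p.1 f := by
    rw [← AdjoinRoot.modByMonicHom_mk p.2.1, AdjoinRoot.mk_leftInverse p.2.1]
  have hg0 : f %ₘ p.1 ≠ 0 := fun h => hy (by rw [← hmk, h, map_zero]; rfl)
  exact ⟨_, hg0, natDegree_lt_natDegree hg0 (degree_modByMonic_lt f p.2.1), hmk⟩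

variable {K : Type u} [Field K] {ν : RatFunc F → ℤ} {res : RatFunc F → K} {m : ℕ}
  {D : ⋀[ℚ]^(m + 1) (UnitsQ (RatFunc F)) →ₗ[ℚ] ⋀[ℚ]^m (UnitsQ K)}

lemma IsTame.map_wedgeF_polynomial_eq_zero {q : MonicIrr F} (hD : IsTame ν res m D)
    (hν : IsNuP q ν) (f : Fin (m + 1) → F[X]) (hf : ∏ i, f i ≠ 0) (hq : ¬ q.1 ∣ ∏ i, f i) :
    D (wedgeF (m + 1) fun i => algebraMap F[X] (RatFunc F) (f i)) = 0 :=
  hD.map_wedgeF_eq_zero hν.1 _ fun i =>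
    have hfi : f i ∣ ∏ j, f j := Finset.dvd_prod_of_mem f (Finset.mem_univ i)
    have hfi0 : f i ≠ 0 := ne_zero_of_dvd_ne_zero hf hfi
    ⟨RatFunc.algebraMap_ne_zero hfi0, hν.2.2 _ hfi0 fun h => hq (h.trans hfi)⟩

end RationalFunctionField

section TameLifts

variable {F : Type u} [Field F] {m : ℕ} {ν : MonicIrr F → RatFunc F → ℤ}
  {res : ∀ p : MonicIrr F, RatFunc F → ResField p}
  {D : ∀ p : MonicIrr F, ⋀[ℚ]^(m + 1) (UnitsQ (RatFunc F)) →ₗ[ℚ] ⋀[ℚ]^m (UnitsQ (ResField p))}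

lemma wedgeF_mem_map_triangularLifts (hν : ∀ p, IsNuP p (ν p))
    (hres : ∀ p, IsResP p (ν p) (res p)) (hD : ∀ p, IsTame (ν p) (res p) m (D p))
    (p : MonicIrr F) (u : Fin m → (ResField p)ˣ) :
    wedgeF m (fun i => (u i : ResField p)) ∈
      (triangularLifts D (fun q => q.1.natDegree) p).map (D p) := by
  choose g hg0 hgdeg hg using fun i => p.exists_lift (u i).ne_zero
  set f : Fin (m + 1) → F[X] := Fin.cons p.1 g
  have hprod : ∏ i, f i = p.1 * ∏ i, g i := Fin.prod_cons _ _
  have hf0 : ∏ i, f i ≠ 0 :=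
    hprod ▸ mul_ne_zero p.2.1.ne_zero (Finset.prod_ne_zero_iff.2 fun i _ => hg0 i)
  have hg_not_dvd {q : MonicIrr F} (hdeg : p.1.natDegree ≤ q.1.natDegree) (i : Fin m) :
      ¬ q.1 ∣ g i := fun h => by
    have := natDegree_le_of_dvd h (hg0 i)
    have := hgdeg i
    omega
  refine ⟨wedgeF (m + 1) fun i => algebraMap F[X] (RatFunc F) (f i),
    ⟨fun q hqp hdeg => ?_, ?_⟩, ?_⟩
  · refine (hD q).map_wedgeF_polynomial_eq_zero (hν q) f hf0 ?_
    rw [hprod, q.2.2.prime.dvd_mul, q.2.2.prime.dvd_finsetProd_iff]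
    rintro (h | ⟨i, -, h⟩)
    exacts [MonicIrr.not_dvd_of_ne hqp h, hg_not_dvd hdeg i h]
  · exact (MonicIrr.finite_setOf_dvd hf0).subset fun q hq =>
      by_contra fun h => hq ((hD q).map_wedgeF_polynomial_eq_zero (hν q) f hf0 h)
  · have hf : (fun i => algebraMap F[X] (RatFunc F) (f i)) =
        Fin.cons (algebraMap F[X] (RatFunc F) p.1) fun i => algebraMap F[X] (RatFunc F) (g i) :=
      Fin.comp_cons _ _ _
    rw [hf, hD p _ _ (RatFunc.algebraMap_ne_zero p.2.1.ne_zero) (hν p).2.1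
      fun i => ⟨RatFunc.algebraMap_ne_zero (hg0 i), (hν p).2.2 _ (hg0 i) (hg_not_dvd le_rfl i)⟩]
    simp only [(hres p).2, hg]

lemma map_triangularLifts_eq_top (hν : ∀ p, IsNuP p (ν p))
    (hres : ∀ p, IsResP p (ν p) (res p)) (hD : ∀ p, IsTame (ν p) (res p) m (D p))
    (p : MonicIrr F) : (triangularLifts D (fun q => q.1.natDegree) p).map (D p) = ⊤ := by
  rw [eq_top_iff, ← span_range_wedgeF_units, Submodule.span_le]
  rintro _ ⟨u, rfl⟩
  exact wedgeF_mem_map_triangularLifts hν hres hD p u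

end TameLifts

theorem statement_5_general (F : Type u) [Field F] (n : ℕ)
    (ν : ∀ p : MonicIrr F, RatFunc F → ℤ) (hν : ∀ p, IsNuP p (ν p))
    (res : ∀ p : MonicIrr F, RatFunc F → ResField p) (hres : ∀ p, IsResP p (ν p) (res p))
    (D : ∀ p : MonicIrr F,
      ⋀[ℚ]^(n + 3) (UnitsQ (RatFunc F)) →ₗ[ℚ] ⋀[ℚ]^(n + 2) (UnitsQ (ResField p)))
    (hD : ∀ p, IsTame (ν p) (res p) (n + 2) (D p))
    (a : ∀ p : MonicIrr F, ⋀[ℚ]^(n + 2) (UnitsQ (ResField p)))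
    (ha : {p | a p ≠ 0}.Finite) :
    ∃ b : ⋀[ℚ]^(n + 3) (UnitsQ (RatFunc F)), ∀ p, D p b = a p :=
  exists_forall_apply_eq_of_triangularLifts (map_triangularLifts_eq_top hν hres hD) a ha

/-- surjectivity of the total tame-symbol map
`Λ^m F(t)^× → ⊕_p Λ^{m-1} F(p)^×`, `m = n + 3 ≥ 3`. -/
theorem statement_5 (k F : Type u) [Field k] [IsAlgClosed k] [CharZero k] [Field F]
    [Algebra k F] (hF : IsFields1 k F) (n : ℕ)
    (ν : ∀ p : MonicIrr F, RatFunc F → ℤ) (hν : ∀ p, IsNuP p (ν p))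
    (res : ∀ p : MonicIrr F, RatFunc F → ResField p) (hres : ∀ p, IsResP p (ν p) (res p))
    (D : ∀ p : MonicIrr F,
      ⋀[ℚ]^(n + 3) (UnitsQ (RatFunc F)) →ₗ[ℚ] ⋀[ℚ]^(n + 2) (UnitsQ (ResField p)))
    (hD : ∀ p, IsTame (ν p) (res p) (n + 2) (D p))
    (a : ∀ p : MonicIrr F, ⋀[ℚ]^(n + 2) (UnitsQ (ResField p)))
    (ha : {p | a p ≠ 0}.Finite) :
    ∃ b : ⋀[ℚ]^(n + 3) (UnitsQ (RatFunc F)), ∀ p, D p b = a p :=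
  statement_5_general F n ν hν res hres D hD a ha
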